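/- arXiv:0805.4482 — 3 statements merged into one kernel-verified Lean document; each statement's English description precedes it below -/
import Mathlib

section
/- Let β ≥ 1 be an integer. The Carlitz polynomial Q_{β,0}(x) = Σ_{k=0}^{β−1} [(β+k−1)!/(k!(β−k−1)!)] 2^{−k} x^{β−k} satisfies the polynomial identity x² Q_{β,0}''(x) − 2x(β+x) Q_{β,0}'(x) + 2β(x+1) Q_{β,0}(x) = 0, where ' denotes formal differentiation of polynomials. -/
open Polynomial Finset

/-- The Carlitz polynomial `Q_{β,0}(x) = Σ_{k=0}^{β-1} (β+k-1)!/(k!(β-k-1)!) 2^{-k} x^{β-k}`,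
as a polynomial with rational coefficients. -/
noncomputable def carlitzQ (β : ℕ) : Polynomial ℚ :=
  ∑ k ∈ Finset.range β,
    Polynomial.C ((Nat.factorial (β + k - 1) : ℚ) / (Nat.factorial k * Nat.factorial (β - k - 1)) *
      (1 / 2) ^ k) * Polynomial.X ^ (β - k)

/-- Coefficient of the Carlitz polynomial. -/
noncomputable def carA (β k : ℕ) : ℚ :=
  (Nat.factorial (β + k - 1) : ℚ) / (Nat.factorial k * Nat.factorial (β - k - 1)) * (1 / 2) ^ k

/-- Action of the ODE operator on a single monomial. -/
lemma termId (c B : ℚ) (n : ℕ) (hn : 1 ≤ n) :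
    X ^ 2 * derivative (derivative (C c * X ^ n)) -
      2 * X * (C B + X) * derivative (C c * X ^ n) +
      C (2 * B) * (X + 1) * (C c * X ^ n)
    = C (c * ((n : ℚ) * ((n : ℚ) - 1) - 2 * B * n + 2 * B)) * X ^ n +
      C (c * (2 * B - 2 * n)) * X ^ (n + 1) := by
  have c2 : (C (2:ℚ) : Polynomial ℚ) = 2 := map_ofNat C 2
  obtain ⟨m, rfl⟩ := Nat.exists_eq_add_of_le hn
  rw [derivative_C_mul_X_pow, derivative_C_mul_X_pow]
  rcases m with _ | m
  · push_cast
    simp only [C_mul, C_add, C_sub, C_1, C_0, c2]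
    ring
  · have h1 : 1 + (m + 1) - 1 = m + 1 := by omega
    have h2 : m + 1 - 1 = m := by omega
    rw [h1, h2]
    push_cast
    simp only [C_mul, C_add, C_sub, C_1, C_0, c2]
    ring

/-- The key cancellation between adjacent coefficients. -/
lemma keyc (B k : ℕ) (hk : k + 2 ≤ B) :
    carA B k * (((B - k : ℕ) : ℚ) * (((B - k : ℕ) : ℚ) - 1) - 2 * B * ((B - k : ℕ) : ℚ) + 2 * B) +
      carA B (k + 1) * (2 * (B : ℚ) - 2 * ((B - (k + 1) : ℕ) : ℚ)) = 0 := by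
  obtain ⟨j, rfl⟩ : ∃ j, B = k + 2 + j := ⟨B - (k + 2), by omega⟩
  unfold carA
  have e1 : k + 2 + j + k - 1 = (2 * k + j + 1) := by omega
  have e3 : k + 2 + j - k - 1 = j + 1 := by omega
  have e2 : k + 2 + j - k = j + 2 := by omega
  have e4 : k + 2 + j + (k + 1) - 1 = (2 * k + j + 1) + 1 := by omega
  have e6 : k + 2 + j - (k + 1) - 1 = j := by omega
  have e5 : k + 2 + j - (k + 1) = j + 1 := by omega
  rw [e1, e3, e2, e4, e6, e5, Nat.factorial_succ (2 * k + j + 1), Nat.factorial_succ j,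
    Nat.factorial_succ k]
  have hf1 : ((Nat.factorial (2 * k + j + 1) : ℚ)) ≠ 0 := by positivity
  have hf2 : ((Nat.factorial k : ℚ)) ≠ 0 := by positivity
  have hf3 : ((Nat.factorial j : ℚ)) ≠ 0 := by positivity
  push_cast
  field_simp
  ring

/-- for an integer `β ≥ 1`, the Carlitz polynomial `Q_{β,0}` satisfies
`x² Q'' − 2x(β+x) Q' + 2β(x+1) Q = 0` as a polynomial identity. -/
theorem statement5 (β : ℕ) (hβ : 1 ≤ β) :
    Polynomial.X ^ 2 * Polynomial.derivative (Polynomial.derivative (carlitzQ β)) -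
      2 * Polynomial.X * (Polynomial.C (β : ℚ) + Polynomial.X) *
        Polynomial.derivative (carlitzQ β) +
      Polynomial.C (2 * (β : ℚ)) * (Polynomial.X + 1) * carlitzQ β = 0 := by
  obtain ⟨b, rfl⟩ : ∃ b, β = b + 1 := ⟨β - 1, by omega⟩
  have step1 :
      Polynomial.X ^ 2 * Polynomial.derivative (Polynomial.derivative (carlitzQ (b+1))) -
        2 * Polynomial.X * (Polynomial.C ((b+1 : ℕ) : ℚ) + Polynomial.X) *
          Polynomial.derivative (carlitzQ (b+1)) +
        Polynomial.C (2 * ((b+1 : ℕ) : ℚ)) * (Polynomial.X + 1) * carlitzQ (b+1)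
      = ∑ k ∈ range (b+1),
          (C (carA (b+1) k * (((b+1-k : ℕ) : ℚ) * (((b+1-k : ℕ) : ℚ) - 1)
              - 2 * ((b+1:ℕ):ℚ) * ((b+1-k : ℕ) : ℚ) + 2 * ((b+1:ℕ):ℚ))) * X ^ (b+1-k) +
           C (carA (b+1) k * (2 * ((b+1:ℕ):ℚ) - 2 * ((b+1-k : ℕ) : ℚ))) * X ^ (b+1-k+1)) := by
    simp only [carlitzQ, derivative_sum, Finset.mul_sum, ← Finset.sum_sub_distrib,
      ← Finset.sum_add_distrib]
    refine Finset.sum_congr rfl fun k hk => ?_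
    have hk' : k < b + 1 := mem_range.mp hk
    exact termId (carA (b+1) k) ((b+1:ℕ):ℚ) (b+1-k) (by omega)
  rw [step1, Finset.sum_add_distrib, Finset.sum_range_succ, Finset.sum_range_succ']
  have z1 : (C (carA (b+1) b * (((b+1-b : ℕ) : ℚ) * (((b+1-b : ℕ) : ℚ) - 1)
      - 2 * ((b+1:ℕ):ℚ) * ((b+1-b : ℕ) : ℚ) + 2 * ((b+1:ℕ):ℚ))) : Polynomial ℚ) * X ^ (b+1-b)
      = 0 := by
    have h : b + 1 - b = 1 := by omega
    rw [h]
    push_cast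
    ring_nf
    simp
  have z2 : (C (carA (b+1) 0 * (2 * ((b+1:ℕ):ℚ) - 2 * ((b+1-0 : ℕ) : ℚ))) : Polynomial ℚ)
      * X ^ (b+1-0+1) = 0 := by
    norm_num
  rw [z1, z2, add_zero, add_zero, ← Finset.sum_add_distrib]
  refine Finset.sum_eq_zero fun k hk => ?_
  have hk' : k < b := mem_range.mp hk
  have he : b + 1 - (k + 1) + 1 = b + 1 - k := by omega
  rw [he, ← add_mul, ← C_add, keyc (b+1) k (by omega), C_0, zero_mul]
end

section
/- Let β ≥ 1 be an integer and let j be an integer with 1 ≤ j ≤ β−1. Then the polynomial identity −x · Q_{β,j}(x) = (1/4) Q_{β,j+1}(x) + j Q_{β,j}(x) + (j−β)(j+β−1) Q_{β,j−1}(x) holds in ℚ[x]. -/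
open Polynomial Finset

/-- `Q_{β,j}(x) = Σ_{k=0}^{β-j-1} (β+j+k-1)!/(k!(β-j-k-1)!) 2^{-k} x^{β-j-k}`
(the empty sum when `j ≥ β`), as a polynomial with rational coefficients. -/
noncomputable def Qbeta (β j : ℕ) : Polynomial ℚ :=
  ∑ k ∈ Finset.range (β - j),
    Polynomial.C ((Nat.factorial (β + j + k - 1) : ℚ) /
      (Nat.factorial k * Nat.factorial (β - j - k - 1)) * (1 / 2) ^ k) *
      Polynomial.X ^ (β - j - k)



noncomputable def fq (β j k : ℕ) : ℚ :=
  (Nat.factorial (β + j + k - 1) : ℚ) /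
      (Nat.factorial k * Nat.factorial (β - j - k - 1)) * (1 / 2) ^ k

lemma fq_eq (β j k s d : ℕ) (h1 : β + j + k - 1 = s) (h2 : β - j - k - 1 = d) :
    fq β j k = (Nat.factorial s : ℚ) / (Nat.factorial k * Nat.factorial d) * (1 / 2) ^ k := by
  unfold fq; rw [h1, h2]

lemma coeff_Qbeta (β j n : ℕ) :
    (Qbeta β j).coeff n = if 1 ≤ n ∧ n ≤ β - j then fq β j (β - j - n) else 0 := by
  unfold Qbeta
  rw [Polynomial.finset_sum_coeff]
  simp only [Polynomial.coeff_C_mul, Polynomial.coeff_X_pow, mul_ite, mul_one, mul_zero]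
  by_cases h : 1 ≤ n ∧ n ≤ β - j
  · rw [if_pos h, Finset.sum_eq_single (β - j - n)]
    · rw [if_pos (by omega)]; rfl
    · intro k hk hne
      rw [if_neg]
      simp only [Finset.mem_range] at hk
      omega
    · intro h'
      simp only [Finset.mem_range] at h'
      omega
  · rw [if_neg h, Finset.sum_eq_zero]
    intro k hk
    simp only [Finset.mem_range] at hk
    rw [if_neg]
    omega
lemma L2 (β j k : ℕ) (hj : 1 ≤ j) (h2 : 2 ≤ k) (hk : k + 1 ≤ β - j) :
    -fq β j k = 1/4 * fq β (j+1) (k-2) + (j:ℚ) * fq β j (k-1) +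
      ((j:ℚ) - (β:ℚ)) * ((j:ℚ) + (β:ℚ) - 1) * fq β (j-1) k := by
  obtain ⟨a, rfl⟩ : ∃ a, j = a + 1 := ⟨j - 1, by omega⟩
  obtain ⟨c, rfl⟩ : ∃ c, k = c + 2 := ⟨k - 2, by omega⟩
  obtain ⟨r, rfl⟩ : ∃ r, β = a + c + r + 4 := ⟨β - a - c - 4, by omega⟩
  rw [show c + 2 - 2 = c by omega, show c + 2 - 1 = c + 1 by omega,
    show a + 1 - 1 = a by omega]
  rw [fq_eq _ _ _ (2*a+2*c+r+5+1) r (by omega) (by omega),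
      fq_eq _ _ _ (2*a+2*c+r+5) (r+1) (by omega) (by omega),
      fq_eq _ _ _ (2*a+2*c+r+5) (r+1) (by omega) (by omega),
      fq_eq _ _ _ (2*a+2*c+r+5) (r+1) (by omega) (by omega)]
  rw [show c + 2 = (c+1)+1 by omega]
  simp only [Nat.factorial_succ]
  have hP : ((2*a+2*c+r+5).factorial : ℚ) ≠ 0 := Nat.cast_ne_zero.mpr (Nat.factorial_ne_zero _)
  have hc : ((c).factorial : ℚ) ≠ 0 := Nat.cast_ne_zero.mpr (Nat.factorial_ne_zero _)
  have hr : ((r).factorial : ℚ) ≠ 0 := Nat.cast_ne_zero.mpr (Nat.factorial_ne_zero _)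
  push_cast
  field_simp
  ring
lemma L0 (β j : ℕ) (hj : 1 ≤ j) (hb : j + 1 ≤ β) :
    -fq β j 0 = ((j:ℚ) - (β:ℚ)) * ((j:ℚ) + (β:ℚ) - 1) * fq β (j-1) 0 := by
  obtain ⟨a, rfl⟩ : ∃ a, j = a + 1 := ⟨j - 1, by omega⟩
  obtain ⟨r, rfl⟩ : ∃ r, β = a + r + 2 := ⟨β - a - 2, by omega⟩
  rw [show a + 1 - 1 = a by omega]
  rw [fq_eq _ _ _ (2*a+r+1+1) r (by omega) (by omega),
      fq_eq _ _ _ (2*a+r+1) (r+1) (by omega) (by omega)]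
  simp only [Nat.factorial_succ]
  have hP : ((2*a+r+1).factorial : ℚ) ≠ 0 := Nat.cast_ne_zero.mpr (Nat.factorial_ne_zero _)
  have hr : ((r).factorial : ℚ) ≠ 0 := Nat.cast_ne_zero.mpr (Nat.factorial_ne_zero _)
  push_cast
  field_simp
  ring

-- k = 1 case with k < β - j (n = β - j ≥ 2)
lemma L1 (β j : ℕ) (hj : 1 ≤ j) (hb : j + 2 ≤ β) :
    -fq β j 1 = (j:ℚ) * fq β j 0 +
      ((j:ℚ) - (β:ℚ)) * ((j:ℚ) + (β:ℚ) - 1) * fq β (j-1) 1 := by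
  obtain ⟨a, rfl⟩ : ∃ a, j = a + 1 := ⟨j - 1, by omega⟩
  obtain ⟨r, rfl⟩ : ∃ r, β = a + r + 3 := ⟨β - a - 3, by omega⟩
  rw [show a + 1 - 1 = a by omega]
  rw [fq_eq _ _ _ (2*a+r+3+1) r (by omega) (by omega),
      fq_eq _ _ _ (2*a+r+3) (r+1) (by omega) (by omega),
      fq_eq _ _ _ (2*a+r+3) (r+1) (by omega) (by omega)]
  rw [show (2*a+r+3) = (2*a+r+2)+1 by omega]
  simp only [Nat.factorial_succ]
  have hP : ((2*a+r+2).factorial : ℚ) ≠ 0 := Nat.cast_ne_zero.mpr (Nat.factorial_ne_zero _)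
  have hr : ((r).factorial : ℚ) ≠ 0 := Nat.cast_ne_zero.mpr (Nat.factorial_ne_zero _)
  push_cast
  field_simp
  ring

-- k = β - j ≥ 2 case (n = 1, m ≥ 2): bottom coefficient
lemma L3 (β j : ℕ) (hj : 1 ≤ j) (hb : j + 2 ≤ β) :
    (0:ℚ) = 1/4 * fq β (j+1) (β-j-2) + (j:ℚ) * fq β j (β-j-1) +
      ((j:ℚ) - (β:ℚ)) * ((j:ℚ) + (β:ℚ) - 1) * fq β (j-1) (β-j) := by
  obtain ⟨a, rfl⟩ : ∃ a, j = a + 1 := ⟨j - 1, by omega⟩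
  obtain ⟨c, rfl⟩ : ∃ c, β = a + c + 3 := ⟨β - a - 3, by omega⟩
  rw [show a + 1 - 1 = a by omega, show a+c+3-(a+1)-2 = c by omega,
      show a+c+3-(a+1)-1 = c+1 by omega, show a+c+3-(a+1) = c+2 by omega]
  rw [fq_eq _ _ _ (2*a+2*c+4) 0 (by omega) (by omega),
      fq_eq _ _ _ (2*a+2*c+4) 0 (by omega) (by omega),
      fq_eq _ _ _ (2*a+2*c+4) 0 (by omega) (by omega)]
  rw [show c + 2 = (c+1)+1 by omega]
  simp only [Nat.factorial_succ, Nat.factorial_zero]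
  have hP : ((2*a+2*c+4).factorial : ℚ) ≠ 0 := Nat.cast_ne_zero.mpr (Nat.factorial_ne_zero _)
  have hc : ((c).factorial : ℚ) ≠ 0 := Nat.cast_ne_zero.mpr (Nat.factorial_ne_zero _)
  push_cast
  field_simp
  ring

-- k = β - j = 1 case (n = 1, m = 1)
lemma L4 (β j : ℕ) (hj : 1 ≤ j) (hb : β = j + 1) :
    (0:ℚ) = (j:ℚ) * fq β j 0 +
      ((j:ℚ) - (β:ℚ)) * ((j:ℚ) + (β:ℚ) - 1) * fq β (j-1) 1 := by
  obtain ⟨a, rfl⟩ : ∃ a, j = a + 1 := ⟨j - 1, by omega⟩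
  subst hb
  rw [show a + 1 - 1 = a by omega]
  rw [fq_eq _ _ _ (2*a+2) 0 (by omega) (by omega),
      fq_eq _ _ _ (2*a+2) 0 (by omega) (by omega)]
  rw [show 2*a+2 = (2*a+1)+1 by omega]
  simp only [Nat.factorial_succ, Nat.factorial_zero, Nat.factorial_one]
  have hP : ((2*a+1).factorial : ℚ) ≠ 0 := Nat.cast_ne_zero.mpr (Nat.factorial_ne_zero _)
  push_cast
  field_simp
  ring

/-- for integers `β ≥ 1` and `1 ≤ j ≤ β-1`, the identity
`−x Q_{β,j} = (1/4) Q_{β,j+1} + j Q_{β,j} + (j−β)(j+β−1) Q_{β,j−1}` holds in `ℚ[x]`. -/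
theorem statement7 (β j : ℕ) (hβ : 1 ≤ β) (hj1 : 1 ≤ j) (hj2 : j ≤ β - 1) :
    -Polynomial.X * Qbeta β j =
      Polynomial.C ((1 : ℚ) / 4) * Qbeta β (j + 1) + Polynomial.C (j : ℚ) * Qbeta β j +
        Polynomial.C (((j : ℚ) - (β : ℚ)) * ((j : ℚ) + (β : ℚ) - 1)) * Qbeta β (j - 1) := by
  have hb : j + 1 ≤ β := by omega
  ext n
  rw [neg_mul, Polynomial.coeff_neg]
  cases n with
  | zero =>
    simp [Polynomial.mul_coeff_zero, coeff_Qbeta]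
  | succ n =>
    rw [Polynomial.coeff_X_mul, Polynomial.coeff_add, Polynomial.coeff_add,
      Polynomial.coeff_C_mul, Polynomial.coeff_C_mul, Polynomial.coeff_C_mul,
      coeff_Qbeta, coeff_Qbeta, coeff_Qbeta, coeff_Qbeta]
    split_ifs with h1 h2 h3 h4 <;> try omega
    · -- general case: 2 ≤ k < β - j
      rw [show β - (j+1) - (n+1) = β - j - n - 2 by omega,
        show β - j - (n+1) = β - j - n - 1 by omega,
        show β - (j-1) - (n+1) = β - j - n by omega]
      exact L2 β j (β - j - n) hj1 (by omega) (by omega)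
    · -- k = 1 : n + 1 = β - j ≥ 2
      rw [show β - j - n = 1 by omega, show β - j - (n+1) = 0 by omega,
        show β - (j-1) - (n+1) = 1 by omega, mul_zero, zero_add]
      exact L1 β j hj1 (by omega)
    · -- k = 0 : n = β - j
      rw [show β - j - n = 0 by omega, show β - (j-1) - (n+1) = 0 by omega,
        mul_zero, mul_zero, zero_add, zero_add]
      exact L0 β j hj1 hb
    · -- n = 0, β - j ≥ 2
      obtain rfl : n = 0 := by omega
      rw [show β - (j+1) - (0+1) = β - j - 2 by omega,
        show β - j - (0+1) = β - j - 1 by omega,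
        show β - (j-1) - (0+1) = β - j by omega, neg_zero]
      exact L3 β j hj1 (by omega)
    · -- n = 0, β = j + 1
      obtain rfl : n = 0 := by omega
      rw [show β - j - (0+1) = 0 by omega, show β - (j-1) - (0+1) = 1 by omega,
        neg_zero, mul_zero, zero_add]
      exact L4 β j hj1 (by omega)
    · simp
end

section
/- Let β ≥ 1 be an integer and let j ≥ 0 be an integer. Then the polynomial identity Q_{β,j+1}(x) = 2(β−j) Q_{β,j}(x) − 2x Q_{β,j}'(x) holds in ℚ[x], where ' denotes formal differentiation of polynomials. -/
open Polynomial Finset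

lemma aux_two_X (b : ℚ) (p : ℕ) :
    2 * Polynomial.X * (Polynomial.C b * Polynomial.X ^ p) =
      Polynomial.C (2 * b) * (Polynomial.X ^ p * Polynomial.X) := by
  have h2 : (Polynomial.C (2 : ℚ)) = 2 := map_ofNat Polynomial.C 2
  rw [Polynomial.C_mul, h2]; ring

/-- for integers `β ≥ 1` and `j ≥ 0`, the identity
`Q_{β,j+1} = 2(β−j) Q_{β,j} − 2x Q_{β,j}'` holds in `ℚ[x]`. -/
theorem statement8 (β j : ℕ) (hβ : 1 ≤ β) :
    Qbeta β (j + 1) =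
      Polynomial.C (2 * ((β : ℚ) - (j : ℚ))) * Qbeta β j -
        2 * Polynomial.X * Polynomial.derivative (Qbeta β j) := by
  rcases le_or_gt β j with h | h
  · have h1 : β - j = 0 := Nat.sub_eq_zero_of_le h
    have h2 : β - (j + 1) = 0 := Nat.sub_eq_zero_of_le (h.trans (Nat.le_succ j))
    simp [Qbeta, h1, h2]
  · obtain ⟨m, hm⟩ : ∃ m, β - j = m + 1 := ⟨β - j - 1, by omega⟩
    have hm' : β - (j + 1) = m := by omega
    have hβjQ : (β : ℚ) - j = (m : ℚ) + 1 := by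
      have hb : (β : ℚ) = ((m + 1 + j : ℕ) : ℚ) := by norm_cast; omega
      rw [hb]; push_cast; ring
    rw [Qbeta, Qbeta, hm, hm', Polynomial.derivative_sum, Finset.mul_sum,
      Finset.mul_sum, ← Finset.sum_sub_distrib]
    have hrw : ∀ k ∈ Finset.range (m + 1),
        Polynomial.C (2 * ((β : ℚ) - (j : ℚ))) *
            (Polynomial.C ((Nat.factorial (β + j + k - 1) : ℚ) /
              (Nat.factorial k * Nat.factorial (m + 1 - k - 1)) * (1 / 2) ^ k) *
              Polynomial.X ^ (m + 1 - k)) -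
          2 * Polynomial.X *
            Polynomial.derivative
              (Polynomial.C ((Nat.factorial (β + j + k - 1) : ℚ) /
                (Nat.factorial k * Nat.factorial (m + 1 - k - 1)) * (1 / 2) ^ k) *
                Polynomial.X ^ (m + 1 - k)) =
        Polynomial.C (2 * k * ((Nat.factorial (β + j + k - 1) : ℚ) /
          (Nat.factorial k * Nat.factorial (m + 1 - k - 1)) * (1 / 2) ^ k)) *
          Polynomial.X ^ (m + 1 - k) := by
      intro k hk
      rw [Finset.mem_range] at hk
      rw [Polynomial.derivative_C_mul_X_pow]
      obtain ⟨p, hp⟩ : ∃ p, m + 1 - k = p + 1 := ⟨m - k, by omega⟩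
      have hpk : p = m - k := by omega
      rw [hp]
      simp only [Nat.add_sub_cancel, pow_succ]
      rw [aux_two_X, ← mul_assoc, ← Polynomial.C_mul, ← sub_mul, ← Polynomial.C_sub]
      congr 1
      rw [Polynomial.C_inj, hβjQ]
      have hpq : ((p : ℚ) + 1) = (m : ℚ) + 1 - k := by
        have : (p : ℚ) = ((m - k : ℕ) : ℚ) := by rw [hpk]
        rw [this, Nat.cast_sub (by omega : k ≤ m)]; ring
      push_cast
      rw [hpq]
      ring
    rw [Finset.sum_congr rfl hrw, Finset.sum_range_succ']
    have h0 : Polynomial.C (2 * ((0 : ℕ) : ℚ) * ((Nat.factorial (β + j + 0 - 1) : ℚ) /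
        (Nat.factorial 0 * Nat.factorial (m + 1 - 0 - 1)) * (1 / 2) ^ 0)) *
        Polynomial.X ^ (m + 1 - 0) = 0 := by
      simp
    rw [h0, add_zero]
    apply Finset.sum_congr rfl
    intro i hi
    rw [Finset.mem_range] at hi
    have e1 : β + (j + 1) + i - 1 = β + j + i := by omega
    have e2 : β + j + (i + 1) - 1 = β + j + i := by omega
    have e3 : m + 1 - (i + 1) = m - i := by omega
    rw [e1, e2, e3]
    congr 1
    rw [Polynomial.C_inj]
    have hfact : (Nat.factorial (i + 1) : ℚ) = ((i : ℚ) + 1) * Nat.factorial i := by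
      rw [Nat.factorial_succ]; push_cast; ring
    rw [hfact]
    have h1 : (Nat.factorial i : ℚ) ≠ 0 := Nat.cast_ne_zero.mpr (Nat.factorial_ne_zero i)
    have h2 : ((i : ℚ) + 1) ≠ 0 := by positivity
    push_cast
    field_simp
    ring
end
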